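/- The single-parity partition function of the half-filled constrained exclusion process satisfies Z_N(q) = ∑_{w ∈ D_N} (N/m(w))·q^{a(w)}, and consequently Z_N(q) = N·∫_0^1 G_N(q,s)/s ds. -/

import Mathlib

open Finset

/-- Height of a ±1 path after `k` steps (`true` = up-step, `false` = down-step). -/
def dheight (w : List Bool) (k : ℕ) : ℤ :=
  ((w.take k).map (fun b => if b then (1 : ℤ) else -1)).sum

/-- A Dyck path: heights stay nonnegative and the path ends at height 0. -/
def IsDyck (w : List Bool) : Prop :=
  (∀ k ∈ Finset.range (w.length + 1), 0 ≤ dheight w k) ∧ dheight w w.length = 0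

/-- The area (number of full lattice squares) under a Dyck path:
`a(w) = (∑_{k=1}^{2N} h_k - N) / 2`. -/
def darea (w : List Bool) : ℤ :=
  ((∑ k ∈ Finset.range w.length, dheight w (k + 1)) - (w.length : ℤ) / 2) / 2

/-- Number of returns of the path to height zero (endpoint counted, start not). -/
def dreturns (w : List Bool) : ℕ :=
  ((Finset.Icc 1 w.length).filter (fun k => dheight w k = 0)).card

-- The q-s Catalan number `G_N(q,s) = ∑_{w ∈ D_N} q^{a(w)} s^{m(w)}`.
open scoped Classical in
noncomputable def Gqs (N : ℕ) (q s : ℝ) : ℝ :=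
  ∑ f : Fin (2 * N) → Bool,
    if IsDyck (List.ofFn f)
    then q ^ (darea (List.ofFn f)).toNat * s ^ dreturns (List.ofFn f)
    else 0

/-- Height function of a ring configuration (`true` = particle, contributing
step `−1`; `false` = hole, step `+1`): `h_k = ∑_{i<k} (1 − 2η_i)`. -/
def cheight (η : ℕ → Bool) (k : ℕ) : ℤ :=
  ∑ i ∈ Finset.range k, (if η i then (-1 : ℤ) else 1)

/-- Minimum of the height function over `k ∈ {0,…,L}`. -/
def chmin (L : ℕ) (η : ℕ → Bool) : ℤ :=
  Finset.min' ((Finset.range (L + 1)).image (cheight η))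
    (Finset.Nonempty.image ⟨0, Finset.mem_range.mpr (Nat.succ_pos L)⟩ _)

/-- Energy of a half-filled configuration on a ring of `2N` sites:
`E(η) = (1/2)∑_{k=1}^{2N}(h_k − h_min − 1/2)`. -/
def cenergy (N : ℕ) (η : ℕ → Bool) : ℤ :=
  ((∑ k ∈ Finset.Icc 1 (2 * N), cheight η k) - 2 * N * chmin (2 * N) η - N) / 2

/-- Extension of a `Fin`-indexed configuration to `ℕ`. -/
def cext (N : ℕ) (f : Fin (2 * N) → Bool) : ℕ → Bool :=
  fun i => if h : i < 2 * N then f ⟨i, h⟩ else false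

/-- Membership in the even ergodic component: half filling and all minimum
sites at even positions. -/
def EvenComp (N : ℕ) (η : ℕ → Bool) : Prop :=
  (∑ i ∈ Finset.range (2 * N), (if η i then 1 else 0)) = N ∧
    ∀ k ∈ Finset.Icc 1 (2 * N), cheight η k = chmin (2 * N) η → Even k

open scoped Classical in
/-- Single-parity partition function `Z_N(q) = ∑_{η ∈ A_N^{(e)}} q^{E(η)}`. -/
noncomputable def Zconf (N : ℕ) (q : ℝ) : ℝ :=
  ∑ f : Fin (2 * N) → Bool,
    if EvenComp N (cext N f) then q ^ (cenergy N (cext N f)).toNat else 0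

/-!
Cutting the ring at a site `k` where the height attains its global minimum, and reading the
configuration cyclically from there with holes as up-steps, gives a Dyck path: its heights are
`h_{k+j} - h_min`, so its area is the energy and its returns to zero are the minimum sites.
Conversely, a Dyck path laid on the ring with its starting point at an even site `k` gives a
configuration with a global minimum at `k` whose minimum sites are all even, because the height
at a site has the parity of the site. So pairs (configuration, minimum site) correspond to pairs
(Dyck path `w`, even `k ∈ [1, 2N]`); weighting each pair by `1 / m(w)` and counting the `N` even
sites gives the weighted sum, and `∫_0^1 s^{m-1} ds = 1/m` gives the integral form.
-/

open Function

theorem Function.Periodic.sum_range_add {M : Type*} [AddCancelCommMonoid M] {g : ℕ → M}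
    {n : ℕ} (hg : Periodic g n) (k : ℕ) :
    ∑ j ∈ range n, g (k + j) = ∑ j ∈ range n, g j := by
  induction k with
  | zero => simp
  | succ k ih =>
    rw [← ih]
    apply add_right_cancel (b := g k)
    calc ∑ j ∈ range n, g (k + 1 + j) + g k
        = ∑ j ∈ range (n + 1), g (k + j) := by
          rw [sum_range_succ']; simp only [add_zero, add_assoc, add_comm 1]
      _ = ∑ j ∈ range n, g (k + j) + g k := by rw [sum_range_succ, hg k]

lemma sum_Icc_one_eq_sum_range {M : Type*} [AddCommMonoid M] (g : ℕ → M) (n : ℕ) :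
    ∑ t ∈ Icc 1 n, g t = ∑ j ∈ range n, g (j + 1) := by
  rw [range_eq_Ico, sum_Ico_add' g 0 n 1]; rfl

theorem Function.Periodic.sum_Icc_one_add {M : Type*} [AddCancelCommMonoid M] {g : ℕ → M}
    {n : ℕ} (hg : Periodic g n) (k : ℕ) :
    ∑ t ∈ Icc 1 n, g (k + t) = ∑ t ∈ Icc 1 n, g t := by
  simp only [sum_Icc_one_eq_sum_range, ← add_assoc]
  exact (hg.add_const 1).sum_range_add k

lemma card_filter_even_Icc (N : ℕ) : #{k ∈ Icc 1 (2 * N) | Even k} = N := by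
  have h := Nat.card_multiples' (2 * N) 2
  rw [Nat.mul_div_cancel_left _ two_pos] at h
  rw [← h]; congr 1; ext k
  simp only [mem_filter, mem_Icc, mem_range, even_iff_two_dvd]
  omega

lemma cheight_succ (η : ℕ → Bool) (k : ℕ) :
    cheight η (k + 1) = cheight η k + if η k then -1 else 1 :=
  sum_range_succ _ _

lemma cheight_add (η : ℕ → Bool) (r j : ℕ) :
    cheight η (r + j) = cheight η r + cheight (fun i => η (r + i)) j :=
  sum_range_add _ _ _

lemma cheight_congr {η η' : ℕ → Bool} {k : ℕ} (h : ∀ i < k, η i = η' i) :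
    cheight η k = cheight η' k :=
  sum_congr rfl fun i hi => by rw [h i (mem_range.mp hi)]

lemma cheight_not (η : ℕ → Bool) (k : ℕ) : cheight (fun i => !η i) k = -cheight η k := by
  rw [cheight, cheight, ← sum_neg_distrib]
  exact sum_congr rfl fun i _ => by cases η i <;> rfl

lemma even_cheight_add (η : ℕ → Bool) (k : ℕ) : Even (cheight η k + k) := by
  induction k with
  | zero => simp [cheight]
  | succ k ih =>
    have h : cheight η (k + 1) + (k + 1 : ℕ) =
        (cheight η k + k) + ((if η k then -1 else 1) + 1) := by
      rw [cheight_succ]; push_cast; ring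
    rw [h]
    exact ih.add (by split <;> decide)

lemma cheight_add_two_mul_count (η : ℕ → Bool) (L : ℕ) :
    cheight η L + 2 * ((∑ i ∈ range L, if η i then 1 else 0 : ℕ) : ℤ) = L := by
  induction L with
  | zero => simp [cheight]
  | succ L ih =>
    rw [cheight_succ, sum_range_succ]
    cases η L <;> simp only [Bool.false_eq_true, if_true, if_false] <;> push_cast at ih ⊢ <;> omega

theorem cheight_periodic {η : ℕ → Bool} {n : ℕ} (hη : Periodic η n) (h0 : cheight η n = 0) :
    Periodic (cheight η) n := fun t => by
  rw [cheight_add, add_eq_left, ← h0]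
  exact (hη.comp fun b => if b then (-1 : ℤ) else 1).sum_range_add t

lemma dheight_succ (w : List Bool) {k : ℕ} (hk : k < w.length) :
    dheight w (k + 1) = dheight w k + if w[k] then 1 else -1 := by
  rw [dheight, dheight, List.take_add_one, List.getElem?_eq_getElem hk, Option.toList_some,
    List.map_append, List.sum_append, List.map_singleton, List.sum_singleton]

section Ring

variable {N : ℕ}

lemma cext_of_lt (f : Fin (2 * N) → Bool) {i : ℕ} (hi : i < 2 * N) : cext N f i = f ⟨i, hi⟩ :=
  dif_pos hi

lemma dheight_ofFn (f : Fin (2 * N) → Bool) {k : ℕ} (hk : k ≤ 2 * N) :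
    dheight (List.ofFn f) k = -cheight (cext N f) k := by
  induction k with
  | zero => simp [dheight, cheight]
  | succ k ih =>
    rw [dheight_succ _ (by simpa using hk), ih (by omega), cheight_succ, cext_of_lt f hk,
      List.getElem_ofFn]
    cases f ⟨k, hk⟩ <;> simp only [if_true, Bool.false_eq_true, if_false] <;> ring

def cper (N : ℕ) (f : Fin (2 * N) → Bool) (i : ℕ) : Bool :=
  cext N f (i % (2 * N))

lemma cper_periodic (f : Fin (2 * N) → Bool) : Periodic (cper N f) (2 * N) := fun i => by
  simp only [cper, Nat.add_mod_right]

lemma cheight_cper_of_le (f : Fin (2 * N) → Bool) {k : ℕ} (hk : k ≤ 2 * N) :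
    cheight (cper N f) k = cheight (cext N f) k :=
  cheight_congr fun i hi => by rw [cper, Nat.mod_eq_of_lt (by omega)]

lemma cheight_cper_periodic {f : Fin (2 * N) → Bool} (hf : cheight (cext N f) (2 * N) = 0) :
    Periodic (cheight (cper N f)) (2 * N) :=
  cheight_periodic (cper_periodic f) (by rw [cheight_cper_of_le f le_rfl, hf])

lemma cheight_cper_eq_mod (hN : 0 < N) {f : Fin (2 * N) → Bool}
    (hf : cheight (cext N f) (2 * N) = 0) (t : ℕ) :
    cheight (cper N f) t = cheight (cext N f) (t % (2 * N)) := by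
  rw [← (cheight_cper_periodic hf).map_mod_nat, cheight_cper_of_le f (Nat.mod_lt _ (by omega)).le]

/-- The word of the ring configuration `f` read cyclically from site `r`, complemented so that
holes (up-steps of `cheight`) become the up-steps `true` of a Dyck word. -/
def rotFlip (N r : ℕ) (f : Fin (2 * N) → Bool) : Fin (2 * N) → Bool :=
  fun i => !cper N f (r + i)

lemma rotFlip_rotFlip {r r' : ℕ} (h : r + r' = 2 * N) (f : Fin (2 * N) → Bool) :
    rotFlip N r' (rotFlip N r f) = f := by
  funext i
  have hi := i.isLt
  have hmod : (r + (r' + i) % (2 * N)) % (2 * N) = i := by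
    rw [Nat.add_mod_mod, ← add_assoc, h, Nat.add_mod_left, Nat.mod_eq_of_lt hi]
  simp only [rotFlip, cper, cext_of_lt _ (Nat.mod_lt _ (by omega : 0 < 2 * N)), Bool.not_not, hmod,
    cext_of_lt _ hi]

lemma cheight_cext_rotFlip (r : ℕ) (f : Fin (2 * N) → Bool) {j : ℕ} (hj : j ≤ 2 * N) :
    cheight (cext N (rotFlip N r f)) j = cheight (cper N f) r - cheight (cper N f) (r + j) := by
  rw [cheight_congr (η' := fun i => !cper N f (r + i)) fun i hi => cext_of_lt _ (by omega),
    cheight_not, cheight_add]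
  ring

lemma dheight_rotFlip (r : ℕ) (f : Fin (2 * N) → Bool) {j : ℕ} (hj : j ≤ 2 * N) :
    dheight (List.ofFn (rotFlip N r f)) j = cheight (cper N f) (r + j) - cheight (cper N f) r := by
  rw [dheight_ofFn _ hj, cheight_cext_rotFlip r f hj]
  ring

end Ring

lemma chmin_le (L : ℕ) (η : ℕ → Bool) {t : ℕ} (ht : t ≤ L) : chmin L η ≤ cheight η t :=
  min'_le _ _ (mem_image_of_mem _ (mem_range.mpr (by omega)))

lemma exists_cheight_eq_chmin (L : ℕ) (η : ℕ → Bool) : ∃ t ≤ L, cheight η t = chmin L η := by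
  obtain ⟨t, ht, h⟩ := mem_image.mp (min'_mem _ _ : chmin L η ∈ (range (L + 1)).image (cheight η))
  exact ⟨t, by simpa [Nat.lt_succ_iff] using ht, h⟩

lemma chmin_eq_of_le {L : ℕ} {η : ℕ → Bool} {c : ℤ} {t : ℕ} (ht : t ≤ L) (hc : cheight η t = c)
    (hle : ∀ j ≤ L, c ≤ cheight η j) : chmin L η = c :=
  le_antisymm (hc ▸ chmin_le L η ht) <| le_min' _ _ _ fun _ hy => by
    obtain ⟨j, hj, rfl⟩ := mem_image.mp hy
    exact hle j (by simpa [Nat.lt_succ_iff] using hj)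

def cminSites (N : ℕ) (η : ℕ → Bool) : Finset ℕ :=
  {k ∈ Icc 1 (2 * N) | cheight η k = chmin (2 * N) η}

lemma evenComp_iff {N : ℕ} {η : ℕ → Bool} :
    EvenComp N η ↔ cheight η (2 * N) = 0 ∧ ∀ k ∈ cminSites N η, Even k := by
  have hcount := cheight_add_two_mul_count η (2 * N)
  refine and_congr ⟨fun h => by rw [h] at hcount; omega, fun h => by rw [h] at hcount; omega⟩
    ⟨fun h k hk => ?_, fun h k hk hmin => ?_⟩
  · exact h k (mem_filter.mp hk).1 (mem_filter.mp hk).2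
  · exact h k (mem_filter.mpr ⟨hk, hmin⟩)

lemma cminSites_nonempty {N : ℕ} (hN : 0 < N) {η : ℕ → Bool} (hη : cheight η (2 * N) = 0) :
    (cminSites N η).Nonempty := by
  obtain ⟨t, ht, hmin⟩ := exists_cheight_eq_chmin (2 * N) η
  rcases Nat.eq_zero_or_pos t with rfl | ht0
  · exact ⟨2 * N, mem_filter.mpr ⟨mem_Icc.mpr ⟨by omega, le_rfl⟩, by rw [hη, ← hmin]; rfl⟩⟩
  · exact ⟨t, mem_filter.mpr ⟨mem_Icc.mpr ⟨ht0, ht⟩, hmin⟩⟩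

section Forward

variable {N k : ℕ} {f : Fin (2 * N) → Bool}

lemma chmin_le_cheight_cper (hN : 0 < N) (hf : cheight (cext N f) (2 * N) = 0) (t : ℕ) :
    chmin (2 * N) (cext N f) ≤ cheight (cper N f) t := by
  rw [cheight_cper_eq_mod hN hf]
  exact chmin_le _ _ (Nat.mod_lt _ (by omega)).le

lemma sum_Icc_cheight_cper_add {M : Type*} [AddCancelCommMonoid M]
    (hf : cheight (cext N f) (2 * N) = 0) (φ : ℤ → M) (k : ℕ) :
    ∑ t ∈ Icc 1 (2 * N), φ (cheight (cper N f) (k + t)) =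
      ∑ t ∈ Icc 1 (2 * N), φ (cheight (cext N f) t) := by
  refine (((cheight_cper_periodic hf).comp φ).sum_Icc_one_add k).trans
    (sum_congr rfl fun t ht => ?_)
  rw [Function.comp_apply, cheight_cper_of_le f (mem_Icc.mp ht).2]

lemma dheight_rotFlip_of_mem_cminSites (hk : k ∈ cminSites N (cext N f)) {j : ℕ}
    (hj : j ≤ 2 * N) :
    dheight (List.ofFn (rotFlip N k f)) j =
      cheight (cper N f) (k + j) - chmin (2 * N) (cext N f) := by
  obtain ⟨hk, hmin⟩ := mem_filter.mp hk
  rw [dheight_rotFlip k f hj, cheight_cper_of_le f (mem_Icc.mp hk).2, hmin]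

lemma isDyck_rotFlip (hN : 0 < N) (hf : cheight (cext N f) (2 * N) = 0)
    (hk : k ∈ cminSites N (cext N f)) : IsDyck (List.ofFn (rotFlip N k f)) := by
  rw [IsDyck, List.length_ofFn]
  refine ⟨fun j hj => ?_, ?_⟩
  · rw [dheight_rotFlip_of_mem_cminSites hk (Nat.lt_succ_iff.mp (mem_range.mp hj)), sub_nonneg]
    exact chmin_le_cheight_cper hN hf _
  · obtain ⟨hk', hmin⟩ := mem_filter.mp hk
    rw [dheight_rotFlip_of_mem_cminSites hk le_rfl, (cheight_cper_periodic hf) k,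
      cheight_cper_of_le f (mem_Icc.mp hk').2, hmin, sub_self]

lemma darea_rotFlip (hf : cheight (cext N f) (2 * N) = 0) (hk : k ∈ cminSites N (cext N f)) :
    darea (List.ofFn (rotFlip N k f)) = cenergy N (cext N f) := by
  have hsum : ∑ j ∈ range (2 * N), dheight (List.ofFn (rotFlip N k f)) (j + 1) =
      ∑ t ∈ Icc 1 (2 * N), cheight (cext N f) t - 2 * N * chmin (2 * N) (cext N f) := by
    rw [← sum_Icc_one_eq_sum_range]
    calc ∑ t ∈ Icc 1 (2 * N), dheight (List.ofFn (rotFlip N k f)) t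
        = ∑ t ∈ Icc 1 (2 * N), (cheight (cper N f) (k + t) - chmin (2 * N) (cext N f)) :=
          sum_congr rfl fun t ht => dheight_rotFlip_of_mem_cminSites hk (mem_Icc.mp ht).2
      _ = ∑ t ∈ Icc 1 (2 * N), (cheight (cext N f) t - chmin (2 * N) (cext N f)) :=
          sum_Icc_cheight_cper_add hf (· - chmin (2 * N) (cext N f)) k
      _ = _ := by simp [sum_sub_distrib]
  rw [darea, cenergy, List.length_ofFn, hsum]
  congr 1
  push_cast
  omega

lemma dreturns_rotFlip (hf : cheight (cext N f) (2 * N) = 0) (hk : k ∈ cminSites N (cext N f)) :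
    dreturns (List.ofFn (rotFlip N k f)) = #(cminSites N (cext N f)) := by
  rw [dreturns, List.length_ofFn, cminSites, card_filter, card_filter]
  calc ∑ t ∈ Icc 1 (2 * N), (if dheight (List.ofFn (rotFlip N k f)) t = 0 then 1 else 0)
      = ∑ t ∈ Icc 1 (2 * N),
          (if cheight (cper N f) (k + t) = chmin (2 * N) (cext N f) then 1 else 0) :=
        sum_congr rfl fun t ht => by
          simp only [dheight_rotFlip_of_mem_cminSites hk (mem_Icc.mp ht).2, sub_eq_zero]
    _ = _ :=
        sum_Icc_cheight_cper_add hf (fun h => if h = chmin (2 * N) (cext N f) then 1 else 0) k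

end Forward

section Backward

variable {N : ℕ} {g : Fin (2 * N) → Bool}

lemma cheight_cext_two_mul_of_isDyck (hg : IsDyck (List.ofFn g)) :
    cheight (cext N g) (2 * N) = 0 := by
  have h := hg.2
  rwa [List.length_ofFn, dheight_ofFn g le_rfl, neg_eq_zero] at h

lemma cheight_cper_nonpos_of_isDyck (hN : 0 < N) (hg : IsDyck (List.ofFn g)) (t : ℕ) :
    cheight (cper N g) t ≤ 0 := by
  have hlt := Nat.mod_lt t (by omega : 0 < 2 * N)
  have h := hg.1 (t % (2 * N)) (mem_range.mpr (by rw [List.length_ofFn]; omega))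
  rw [dheight_ofFn g hlt.le] at h
  rw [cheight_cper_eq_mod hN (cheight_cext_two_mul_of_isDyck hg)]
  omega

lemma cheight_cext_rotFlip_sub (hg : IsDyck (List.ofFn g)) {r : ℕ} (hr : r ≤ 2 * N) :
    cheight (cext N (rotFlip N r g)) (2 * N - r) = cheight (cper N g) r := by
  rw [cheight_cext_rotFlip r g (Nat.sub_le _ _), Nat.add_sub_cancel' hr,
    cheight_cper_of_le g le_rfl, cheight_cext_two_mul_of_isDyck hg, sub_zero]

lemma chmin_rotFlip_of_isDyck (hN : 0 < N) (hg : IsDyck (List.ofFn g)) {r : ℕ}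
    (hr : r ≤ 2 * N) : chmin (2 * N) (cext N (rotFlip N r g)) = cheight (cper N g) r := by
  refine chmin_eq_of_le (Nat.sub_le _ r) (cheight_cext_rotFlip_sub hg hr) fun j hj => ?_
  rw [cheight_cext_rotFlip r g hj]
  linarith [cheight_cper_nonpos_of_isDyck hN hg (r + j)]

lemma evenComp_rotFlip (hN : 0 < N) (hg : IsDyck (List.ofFn g)) {r : ℕ} (hr : r ≤ 2 * N)
    (hre : Even r) : EvenComp N (cext N (rotFlip N r g)) := by
  refine evenComp_iff.mpr ⟨?_, fun t ht => ?_⟩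
  · rw [cheight_cext_rotFlip r g le_rfl,
      (cheight_cper_periodic (cheight_cext_two_mul_of_isDyck hg)) r, sub_self]
  · obtain ⟨ht, hmin⟩ := mem_filter.mp ht
    rw [chmin_rotFlip_of_isDyck hN hg hr, cheight_cext_rotFlip r g (mem_Icc.mp ht).2,
      sub_eq_self] at hmin
    have hpar := even_cheight_add (cper N g) (r + t)
    rw [hmin, zero_add] at hpar
    exact (Nat.even_add.mp (by exact_mod_cast hpar)).mp hre

lemma mem_cminSites_rotFlip (hN : 0 < N) (hg : IsDyck (List.ofFn g)) {k : ℕ}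
    (hk : k ∈ Icc 1 (2 * N)) : k ∈ cminSites N (cext N (rotFlip N (2 * N - k) g)) := by
  have hk2 := (mem_Icc.mp hk).2
  refine mem_filter.mpr ⟨hk, ?_⟩
  rw [chmin_rotFlip_of_isDyck hN hg (Nat.sub_le _ _),
    ← cheight_cext_rotFlip_sub hg (Nat.sub_le _ _), Nat.sub_sub_self hk2]

end Backward

open scoped Classical in
theorem sum_sigma_cminSites_eq_sum_sigma_even {M : Type*} [AddCommMonoid M] {N : ℕ} (hN : 0 < N)
    (φ : ℤ → ℕ → M) :
    ∑ p ∈ (univ.filter fun f : Fin (2 * N) → Bool => EvenComp N (cext N f)).sigma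
          fun f => cminSites N (cext N f),
        φ (cenergy N (cext N p.1)) #(cminSites N (cext N p.1)) =
      ∑ p ∈ (univ.filter fun g : Fin (2 * N) → Bool => IsDyck (List.ofFn g)).sigma
          fun _ => {k ∈ Icc 1 (2 * N) | Even k},
        φ (darea (List.ofFn p.1)) (dreturns (List.ofFn p.1)) := by
  refine sum_nbij' (fun p => ⟨rotFlip N p.2 p.1, p.2⟩)
    (fun p => ⟨rotFlip N (2 * N - p.2) p.1, p.2⟩) ?_ ?_ ?_ ?_ ?_
  · rintro ⟨f, k⟩ hp
    obtain ⟨hf, hk⟩ := mem_sigma.mp hp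
    have hf' := evenComp_iff.mp (mem_filter.mp hf).2
    exact mem_sigma.mpr ⟨mem_filter.mpr ⟨mem_univ _, isDyck_rotFlip hN hf'.1 hk⟩,
      mem_filter.mpr ⟨(mem_filter.mp hk).1, hf'.2 k hk⟩⟩
  · rintro ⟨g, k⟩ hp
    obtain ⟨hg, hk⟩ := mem_sigma.mp hp
    have hg := (mem_filter.mp hg).2
    obtain ⟨hk', hke⟩ := mem_filter.mp hk
    have hre : Even (2 * N - k) :=
      (Nat.even_sub (mem_Icc.mp hk').2).mpr (iff_of_true (even_two_mul N) hke)
    exact mem_sigma.mpr ⟨mem_filter.mpr ⟨mem_univ _, evenComp_rotFlip hN hg (Nat.sub_le _ _) hre⟩,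
      mem_cminSites_rotFlip hN hg hk'⟩
  · rintro ⟨f, k⟩ hp
    have hk := (mem_Icc.mp (mem_filter.mp (mem_sigma.mp hp).2).1).2
    simp only [rotFlip_rotFlip (Nat.add_sub_cancel' hk)]
  · rintro ⟨g, k⟩ hp
    have hk := (mem_Icc.mp (mem_filter.mp (mem_sigma.mp hp).2).1).2
    simp only [rotFlip_rotFlip (Nat.sub_add_cancel hk)]
  · rintro ⟨f, k⟩ hp
    obtain ⟨hf, hk⟩ := mem_sigma.mp hp
    have hbal := (evenComp_iff.mp (mem_filter.mp hf).2).1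
    simp only [darea_rotFlip hbal hk, dreturns_rotFlip hbal hk]

open scoped Classical in
theorem Zconf_eq_sum_isDyck {N : ℕ} (hN : 0 < N) (q : ℝ) :
    Zconf N q = ∑ f : Fin (2 * N) → Bool, if IsDyck (List.ofFn f)
      then ((N : ℝ) / dreturns (List.ofFn f)) * q ^ (darea (List.ofFn f)).toNat else 0 := by
  calc Zconf N q
      = ∑ f ∈ univ.filter (fun f => EvenComp N (cext N f)), ∑ _k ∈ cminSites N (cext N f),
          q ^ (cenergy N (cext N f)).toNat / #(cminSites N (cext N f)) := by
        rw [Zconf, ← sum_filter]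
        refine sum_congr rfl fun f hf => ?_
        have hm := (cminSites_nonempty hN (evenComp_iff.mp (mem_filter.mp hf).2).1).card_pos
        rw [sum_const, nsmul_eq_mul, mul_div_cancel₀ _ (by positivity)]
    _ = ∑ g ∈ univ.filter (fun g => IsDyck (List.ofFn g)), ∑ _k ∈ Icc 1 (2 * N) with Even _k,
          q ^ (darea (List.ofFn g)).toNat / dreturns (List.ofFn g) := by
        simpa only [sum_sigma] using
          sum_sigma_cminSites_eq_sum_sigma_even hN fun a m => q ^ a.toNat / (m : ℝ)
    _ = _ := by
        rw [sum_filter]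
        refine sum_congr rfl fun g _ => ?_
        split_ifs
        · rw [sum_const, card_filter_even_Icc, nsmul_eq_mul, mul_div_assoc', div_mul_eq_mul_div]
        · rfl

lemma dreturns_pos_of_isDyck {w : List Bool} (hw : w ≠ []) (hD : IsDyck w) : 0 < dreturns w :=
  card_pos.mpr ⟨w.length, mem_filter.mpr
    ⟨mem_Icc.mpr ⟨List.length_pos_iff.mpr hw, le_rfl⟩, hD.2⟩⟩

open scoped Classical in
lemma Gqs_div {N : ℕ} (hN : 0 < N) (q : ℝ) {s : ℝ} (hs : s ≠ 0) :
    Gqs N q s / s = ∑ f : Fin (2 * N) → Bool, if IsDyck (List.ofFn f)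
      then q ^ (darea (List.ofFn f)).toNat * s ^ (dreturns (List.ofFn f) - 1) else 0 := by
  rw [Gqs, sum_div]
  refine sum_congr rfl fun f _ => ?_
  split_ifs with hD
  · have hm := dreturns_pos_of_isDyck (by rw [Ne, List.ofFn_eq_nil_iff]; omega) hD
    rw [mul_div_assoc, ← Nat.sub_add_cancel hm, pow_succ, mul_div_cancel_right₀ _ hs,
      Nat.add_sub_cancel]
  · exact zero_div s

open scoped Classical in
theorem integral_Gqs_div {N : ℕ} (hN : 0 < N) (q : ℝ) :
    ∫ s in (0 : ℝ)..1, Gqs N q s / s = ∑ f : Fin (2 * N) → Bool, if IsDyck (List.ofFn f)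
      then q ^ (darea (List.ofFn f)).toNat / dreturns (List.ofFn f) else 0 := by
  rw [intervalIntegral.integral_congr_ae (MeasureTheory.ae_of_all _ fun s hs =>
      Gqs_div hN q (Set.uIoc_of_le (zero_le_one' ℝ) ▸ hs).1.ne'),
    intervalIntegral.integral_finsetSum fun f _ => by
      split_ifs <;> exact Continuous.intervalIntegrable (by fun_prop) _ _]
  refine sum_congr rfl fun f _ => ?_
  split_ifs with hD
  · have hm := dreturns_pos_of_isDyck (by rw [Ne, List.ofFn_eq_nil_iff]; omega) hD
    rw [intervalIntegral.integral_const_mul, integral_pow, Nat.sub_add_cancel hm, one_pow,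
      zero_pow hm.ne', sub_zero, Nat.cast_sub hm, Nat.cast_one, sub_add_cancel, mul_one_div]
  · simp

open scoped Classical in
/-- The single-parity partition function satisfies
`Z_N(q) = ∑_{w ∈ D_N} (N/m(w)) q^{a(w)}`, and consequently
`Z_N(q) = N ∫_0^1 G_N(q,s)/s ds`. -/
theorem Zconf_eq_weighted_dyck_sum (N : ℕ) (hN : 1 ≤ N) (q : ℝ) :
    Zconf N q =
        (∑ f : Fin (2 * N) → Bool,
          if IsDyck (List.ofFn f)
          then ((N : ℝ) / dreturns (List.ofFn f)) * q ^ (darea (List.ofFn f)).toNat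
          else 0) ∧
      Zconf N q = N * ∫ s in (0 : ℝ)..1, Gqs N q s / s := by
  refine ⟨Zconf_eq_sum_isDyck hN q, ?_⟩
  rw [Zconf_eq_sum_isDyck hN q, integral_Gqs_div hN q, mul_sum]
  refine sum_congr rfl fun f _ => ?_
  split_ifs <;> ring
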